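/- arXiv:2105.05955 — 5 statements merged into one kernel-verified Lean document; each statement's English description precedes it below -/
import Mathlib

section
/- Let N ∈ ℝ³ be nonzero, q ∈ ℝ³, and let D_c = R_{[N,q]}(0) and N_D = R_{[N,0]}(−e₃). Then for every T ∈ ℝ³: T lies on the forward-pointing ray {D_c + t·N_D : t ≥ 0} if and only if R_{[N,q]}(T) ∈ Z≤0; and T lies on the backward-pointing ray {D_c + t·N_D : t ≤ 0} if and only if R_{[N,q]}(T) ∈ Z≥0. -/
open RealInnerProductSpace

noncomputable section

/-- ℝ³ with the Euclidean inner product and norm. -/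
abbrev E3 := EuclideanSpace ℝ (Fin 3)

/-- The standard basis vector e₃ = (0,0,1). -/
def e3 : E3 := EuclideanSpace.single 2 1

/-- Reflection over the plane `{x | ⟪N, x - q⟫ = 0}`:
`R_{[N,q]}(a) = a − 2(⟪N, a − q⟫/‖N‖²) • N`. -/
def refl3 (N q a : E3) : E3 := a - (2 * ⟪N, a - q⟫ / ‖N‖ ^ 2) • N

/-- The nonpositive part of the z-axis, `Z≤0`. -/
def Zneg : Set E3 := {x | ∃ t : ℝ, t ≤ 0 ∧ x = t • e3}

/-- The nonnegative part of the z-axis, `Z≥0`. -/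
def Zpos : Set E3 := {x | ∃ t : ℝ, 0 ≤ t ∧ x = t • e3}

/-!
The reflection `R = R_{[N,q]}` is an affine involution whose linear part is `R_{[N,0]}`.
Hence `R (D_c + t • N_D) = R (R 0) + t • R_{[N,0]} (R_{[N,0]} (-e₃)) = -t • e₃`, so `R` maps the
line through `D_c` with direction `N_D` onto the z-axis, reversing the parameter; the rays
`t ≥ 0` and `t ≤ 0` go to `Z≤0` and `Z≥0`.
-/

lemma inner_refl3_sub {N : E3} (hN : N ≠ 0) (q a : E3) :
    ⟪N, refl3 N q a - q⟫ = -⟪N, a - q⟫ := by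
  have hN2 : ‖N‖ ^ 2 ≠ 0 := pow_ne_zero 2 (norm_ne_zero_iff.mpr hN)
  rw [refl3, sub_right_comm, inner_sub_right, inner_smul_right, real_inner_self_eq_norm_sq]
  field_simp
  ring

lemma refl3_involutive {N : E3} (hN : N ≠ 0) (q : E3) : Function.Involutive (refl3 N q) := by
  intro a
  rw [refl3, inner_refl3_sub hN, refl3]
  module

lemma refl3_add_smul (N q a v : E3) (t : ℝ) :
    refl3 N q (a + t • v) = refl3 N q a + t • refl3 N 0 v := by
  simp only [refl3, sub_zero, add_sub_right_comm a, inner_add_right, inner_smul_right]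
  module

lemma refl3_eq_smul_e3_iff {N : E3} (hN : N ≠ 0) (q T : E3) (t : ℝ) :
    refl3 N q T = (-t) • e3 ↔ T = refl3 N q 0 + t • refl3 N 0 (-e3) := by
  have hline : refl3 N q (refl3 N q 0 + t • refl3 N 0 (-e3)) = (-t) • e3 := by
    rw [refl3_add_smul, refl3_involutive hN, refl3_involutive hN, zero_add, smul_neg, neg_smul]
  rw [(refl3_involutive hN q).eq_iff, ← hline, refl3_involutive hN]

/-- **Pointing Lemma.** A configuration with midplane normal to `N ≠ 0` through `q`
points at `T` iff `R_{[N,q]}(T) ∈ Z≤0`, and backward-points at `T` iff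
`R_{[N,q]}(T) ∈ Z≥0`. -/
theorem pointing_lemma (N q : E3) (hN : N ≠ 0) (T : E3) :
    ((∃ t : ℝ, 0 ≤ t ∧ T = refl3 N q 0 + t • refl3 N 0 (-e3)) ↔ refl3 N q T ∈ Zneg) ∧
    ((∃ t : ℝ, t ≤ 0 ∧ T = refl3 N q 0 + t • refl3 N 0 (-e3)) ↔ refl3 N q T ∈ Zpos) := by
  simp only [Zneg, Zpos, Set.mem_ofPred_eq, ← refl3_eq_smul_e3_iff hN]
  constructor
  · constructor
    · rintro ⟨t, ht, hT⟩
      exact ⟨-t, neg_nonpos.mpr ht, hT⟩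
    · rintro ⟨s, hs, hT⟩
      exact ⟨-s, neg_nonneg.mpr hs, by rwa [neg_neg]⟩
  · constructor
    · rintro ⟨t, ht, hT⟩
      exact ⟨-t, neg_nonneg.mpr ht, hT⟩
    · rintro ⟨s, hs, hT⟩
      exact ⟨-s, neg_nonpos.mpr hs, by rwa [neg_neg]⟩
end
end

section
/- Let N ∈ ℝ³ be nonzero, q ∈ ℝ³, D_c = R_{[N,q]}(0), N_D = R_{[N,0]}(−e₃), and T ∈ ℝ³. Then T lies on the forward-pointing ray {D_c + t·N_D : t ≥ 0} if and only if either (⟨N, T − q⟩ = 0 and T ∈ Z≤0), or there exists K ∈ Z≤0 with K ≠ T such that the plane {x : ⟨N, x − q⟩ = 0} equals the plane {x : ⟨T − K, x − (T + K)/2⟩ = 0}. The same statement holds for the backward-pointing ray {D_c + t·N_D : t ≤ 0} with Z≤0 replaced by Z≥0. -/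
/-!
A point `K` is sent to `T` by the reflection in the plane `P` iff `T - K` is normal to `P` and
the midpoint of `K` and `T` lies on `P`. When `K = T` this says `T ∈ P`; when `K ≠ T` it says
that `P` is the perpendicular bisector plane of `K` and `T`. Since reflection is affine, the ray
`D_c + t • N_D` is the image of the half-axis `{-t • e₃}` under the reflection in the midplane,
so `T` lies on the ray iff it is the mirror image of a point `K` of that half-axis.
-/

open RealInnerProductSpace

noncomputable section

section Hyperplane

variable {F : Type*} [NormedAddCommGroup F] [InnerProductSpace ℝ F]

theorem exists_eq_smul_of_forall_inner_eq_zero {N w : F}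
    (h : ∀ v, ⟪N, v⟫ = 0 → ⟪w, v⟫ = 0) : ∃ c : ℝ, w = c • N := by
  have hw : w ∈ (ℝ ∙ N)ᗮᗮ := by
    rw [Submodule.mem_orthogonal]
    intro u hu
    rw [Submodule.mem_orthogonal_singleton_iff_inner_right] at hu
    rw [real_inner_comm]
    exact h u hu
  rw [Submodule.orthogonal_orthogonal, Submodule.mem_span_singleton] at hw
  obtain ⟨c, hc⟩ := hw
  exact ⟨c, hc.symm⟩

theorem setOf_inner_sub_eq_zero_eq_iff {N w : F} (q m : F) (hw : w ≠ 0) :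
    {x : F | ⟪N, x - q⟫ = 0} = {x : F | ⟪w, x - m⟫ = 0} ↔
      (∃ c : ℝ, w = c • N) ∧ ⟪N, m - q⟫ = 0 := by
  constructor
  · intro hplane
    have hmem : ∀ v, ⟪N, v⟫ = 0 → ⟪w, q + v - m⟫ = 0 := fun v hv => by
      have hv' : q + v ∈ {x : F | ⟪N, x - q⟫ = 0} := by simpa using hv
      rwa [hplane] at hv'
    have hq : ⟪w, q - m⟫ = 0 := by simpa using hmem 0 (inner_zero_right _)
    obtain ⟨c, rfl⟩ : ∃ c : ℝ, w = c • N := by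
      refine exists_eq_smul_of_forall_inner_eq_zero fun v hv => ?_
      have h := hmem v hv
      rwa [add_sub_right_comm, inner_add_right, hq, zero_add] at h
    have hc : c ≠ 0 := by rintro rfl; simp at hw
    refine ⟨⟨c, rfl⟩, ?_⟩
    rw [real_inner_smul_left, mul_eq_zero, ← neg_sub, inner_neg_right, neg_eq_zero] at hq
    exact hq.resolve_left hc
  · rintro ⟨⟨c, rfl⟩, hm⟩
    have hc : c ≠ 0 := by rintro rfl; simp at hw
    ext x
    have hx : ⟪c • N, x - m⟫ = c * ⟪N, x - q⟫ := by
      rw [real_inner_smul_left, ← sub_sub_sub_cancel_right x m q, inner_sub_right, hm, sub_zero]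
    simp [hx, hc]

end Hyperplane

theorem refl3_zero_add_smul (N q v : E3) (s : ℝ) :
    refl3 N q 0 + s • refl3 N 0 v = refl3 N q (s • v) := by
  simp only [refl3, inner_sub_right, inner_smul_right, sub_zero, zero_sub, inner_neg_right]
  module

theorem eq_refl3_iff {N : E3} (q : E3) (hN : N ≠ 0) (T K : E3) :
    T = refl3 N q K ↔ (∃ c : ℝ, T - K = c • N) ∧ ⟪N, (1/2 : ℝ) • (T + K) - q⟫ = 0 := by
  have hn : ‖N‖ ^ 2 ≠ 0 := by positivity
  have hmid : ∀ c : ℝ, T - K = c • N →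
      ⟪N, (1/2 : ℝ) • (T + K) - q⟫ = ⟪N, K - q⟫ + c / 2 * ‖N‖ ^ 2 := fun c hc => by
    rw [show (1/2 : ℝ) • (T + K) - q = (K - q) + (1/2 : ℝ) • (T - K) by module, hc,
      inner_add_right, inner_smul_right, real_inner_smul_right, real_inner_self_eq_norm_sq]
    ring
  constructor
  · rintro rfl
    have hc : refl3 N q K - K = -(2 * ⟪N, K - q⟫ / ‖N‖ ^ 2) • N := by
      rw [refl3, neg_smul]; abel
    refine ⟨⟨_, hc⟩, ?_⟩
    rw [hmid _ hc]
    field_simp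
    ring
  · rintro ⟨⟨c, hc⟩, hm⟩
    have hK : 2 * ⟪N, K - q⟫ / ‖N‖ ^ 2 = -c := by
      rw [hmid c hc] at hm
      field_simp
      linarith
    rw [refl3, hK, neg_smul, sub_neg_eq_add, ← hc, add_sub_cancel]

theorem eq_refl3_iff_or_perpBisector {N : E3} (q : E3) (hN : N ≠ 0) (T K : E3) :
    T = refl3 N q K ↔
      (⟪N, T - q⟫ = 0 ∧ K = T) ∨
        (K ≠ T ∧ {x : E3 | ⟪N, x - q⟫ = 0} =
          {x : E3 | ⟪T - K, x - (1/2 : ℝ) • (T + K)⟫ = 0}) := by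
  rw [eq_refl3_iff q hN]
  by_cases hKT : K = T
  · subst hKT
    have hmid : (1/2 : ℝ) • (K + K) = K := by module
    have hzero : ∃ c : ℝ, (0 : E3) = c • N := ⟨0, (zero_smul ℝ N).symm⟩
    rw [hmid]
    simp [hzero]
  · rw [setOf_inner_sub_eq_zero_eq_iff q _ (sub_ne_zero.mpr (Ne.symm hKT))]
    simp [hKT]

theorem exists_mem_eq_refl3_iff {N : E3} (q : E3) (hN : N ≠ 0) (T : E3) (Z : Set E3) :
    (∃ K ∈ Z, T = refl3 N q K) ↔
      (⟪N, T - q⟫ = 0 ∧ T ∈ Z) ∨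
        ∃ K ∈ Z, K ≠ T ∧
          {x : E3 | ⟪N, x - q⟫ = 0} = {x : E3 | ⟪T - K, x - (1/2 : ℝ) • (T + K)⟫ = 0} := by
  simp only [eq_refl3_iff_or_perpBisector q hN]
  constructor
  · rintro ⟨K, hK, ⟨hT, rfl⟩ | hbis⟩
    exacts [Or.inl ⟨hT, hK⟩, Or.inr ⟨K, hK, hbis⟩]
  · rintro (⟨hT, hTZ⟩ | ⟨K, hK, hbis⟩)
    exacts [⟨T, hTZ, Or.inl ⟨hT, rfl⟩⟩, ⟨K, hK, Or.inr hbis⟩]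

theorem refl3_zero_add_smul_neg_e3 (N q : E3) (t : ℝ) :
    refl3 N q 0 + t • refl3 N 0 (-e3) = refl3 N q ((-t) • e3) := by
  rw [refl3_zero_add_smul, smul_neg, neg_smul]

theorem exists_nonneg_eq_ray_iff (N q T : E3) :
    (∃ t : ℝ, 0 ≤ t ∧ T = refl3 N q 0 + t • refl3 N 0 (-e3)) ↔
      ∃ K ∈ Zneg, T = refl3 N q K := by
  simp only [refl3_zero_add_smul_neg_e3, Zneg, Set.mem_ofPred_eq]
  constructor
  · rintro ⟨t, ht, hT⟩
    exact ⟨_, ⟨-t, by linarith, rfl⟩, hT⟩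
  · rintro ⟨_, ⟨s, hs, rfl⟩, hT⟩
    exact ⟨-s, by linarith, by rwa [neg_neg]⟩

theorem exists_nonpos_eq_ray_iff (N q T : E3) :
    (∃ t : ℝ, t ≤ 0 ∧ T = refl3 N q 0 + t • refl3 N 0 (-e3)) ↔
      ∃ K ∈ Zpos, T = refl3 N q K := by
  simp only [refl3_zero_add_smul_neg_e3, Zpos, Set.mem_ofPred_eq]
  constructor
  · rintro ⟨t, ht, hT⟩
    exact ⟨_, ⟨-t, by linarith, rfl⟩, hT⟩
  · rintro ⟨_, ⟨s, hs, rfl⟩, hT⟩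
    exact ⟨-s, by linarith, by rwa [neg_neg]⟩

/-- **Affine pointing to midplane.** A configuration with midplane normal to `N ≠ 0`
through `q` points at `T` iff either `T` lies on the midplane and `T ∈ Z≤0`, or there
is `K ∈ Z≤0`, `K ≠ T`, such that the midplane is the perpendicular bisector plane of
`T` and `K`; analogously for backward-pointing with `Z≥0`. -/
theorem affine_pointing_to_midplane (N q : E3) (hN : N ≠ 0) (T : E3) :
    ((∃ t : ℝ, 0 ≤ t ∧ T = refl3 N q 0 + t • refl3 N 0 (-e3)) ↔
      ((⟪N, T - q⟫ = 0 ∧ T ∈ Zneg) ∨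
        ∃ K ∈ Zneg, K ≠ T ∧
          {x : E3 | ⟪N, x - q⟫ = 0} =
            {x : E3 | ⟪T - K, x - (1/2 : ℝ) • (T + K)⟫ = 0})) ∧
    ((∃ t : ℝ, t ≤ 0 ∧ T = refl3 N q 0 + t • refl3 N 0 (-e3)) ↔
      ((⟪N, T - q⟫ = 0 ∧ T ∈ Zpos) ∨
        ∃ K ∈ Zpos, K ≠ T ∧
          {x : E3 | ⟪N, x - q⟫ = 0} =
            {x : E3 | ⟪T - K, x - (1/2 : ℝ) • (T + K)⟫ = 0})) := by
  rw [exists_nonneg_eq_ray_iff, exists_nonpos_eq_ray_iff]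
  exact ⟨exists_mem_eq_refl3_iff q hN T Zneg, exists_mem_eq_refl3_iff q hN T Zpos⟩
end
end

section
/- Let N ∈ ℝ³ be nonzero, q ∈ ℝ³, and for i = 1, 2, 3 let N_i ∈ ℝ³ be unit vectors, B_i ∈ ℝ³, and ℓ_i > 0, with M_i = {x ∈ ℝ³ : ⟨N_i, x − B_i⟩ = 0 ∧ ‖x − B_i‖ = ℓ_i} and P = {x ∈ ℝ³ : ⟨N, x − q⟩ = 0}. If N × N_i ≠ 0 for each i, then each intersection M_i ∩ P has at most 2 elements, and the set {(m₁, m₂, m₃) ∈ ℝ³ × ℝ³ × ℝ³ : m₁ ∈ M₁ ∩ P ∧ m₂ ∈ M₂ ∩ P ∧ m₃ ∈ M₃ ∩ P} is finite with at most 8 elements. -/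
open RealInnerProductSpace

noncomputable section

/-- The cross product on ℝ³. -/
def cross3 (a b : E3) : E3 :=
  (WithLp.equiv 2 (Fin 3 → ℝ)).symm
    ![a 1 * b 2 - a 2 * b 1, a 2 * b 0 - a 0 * b 2, a 0 * b 1 - a 1 * b 0]

/-! Since `N × Nᵢ ≠ 0`, the normals `N` and `Nᵢ` are linearly independent, so the two planes
containing `Mᵢ ∩ P` meet in a line. Thus `Mᵢ ∩ P` is a collinear subset of a sphere, and three
distinct points of a sphere are never collinear, so `Mᵢ ∩ P` has at most two points. The midjoint
triples form the product of the three sets `Mᵢ ∩ P`. -/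

open Module EuclideanGeometry

lemma cross3_eq_crossProduct (a b : E3) :
    cross3 a b = WithLp.toLp 2 (crossProduct (WithLp.ofLp a) (WithLp.ofLp b)) := by
  rw [cross_apply]
  rfl

lemma cross3_ne_zero_iff_linearIndependent {a b : E3} :
    cross3 a b ≠ 0 ↔ LinearIndependent ℝ ![a, b] := by
  rw [cross3_eq_crossProduct, Ne, WithLp.toLp_eq_zero, ← Ne,
    crossProduct_ne_zero_iff_linearIndependent,
    ← LinearMap.linearIndependent_iff (WithLp.linearEquiv 2 ℝ (Fin 3 → ℝ)).symm.toLinearMap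
      (LinearEquiv.ker _)]
  congr!
  ext i
  fin_cases i <;> rfl

theorem Collinear.encard_le_two_of_cospherical {V P : Type*} [NormedAddCommGroup V]
    [InnerProductSpace ℝ V] [MetricSpace P] [NormedAddTorsor V P] {s : Set P}
    (hcol : Collinear ℝ s) (hsph : Cospherical s) : s.encard ≤ 2 := by
  by_contra! h
  obtain ⟨t, hts, ht⟩ := Set.exists_subset_encard_eq (Order.add_one_le_of_lt h)
  obtain ⟨a, b, c, hab, hac, hbc, rfl⟩ := Set.encard_eq_three.mp ht
  exact affineIndependent_iff_not_collinear_set.mp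
    ((hsph.subset hts).affineIndependent_of_ne hab hac hbc) (hcol.subset hts)

section

variable {V : Type*} [NormedAddCommGroup V] [InnerProductSpace ℝ V]

lemma finrank_orthogonal_span_pair [FiniteDimensional ℝ V] {u v : V}
    (huv : LinearIndependent ℝ ![u, v]) :
    finrank ℝ (Submodule.span ℝ {u, v})ᗮ = finrank ℝ V - 2 := by
  have h := (Submodule.span ℝ {u, v}).finrank_add_finrank_orthogonal
  rw [← Matrix.range_cons_cons_empty u v ![]] at h ⊢
  rw [finrank_span_eq_card huv, Fintype.card_fin] at h
  omega

theorem collinear_plane_inter_plane (hV : finrank ℝ V = 3) {u v : V}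
    (huv : LinearIndependent ℝ ![u, v]) (p q : V) :
    Collinear ℝ ({x | ⟪u, x - p⟫ = 0} ∩ {x | ⟪v, x - q⟫ = 0}) := by
  have : FiniteDimensional ℝ V := .of_finrank_eq_succ hV
  have hdir : vectorSpan ℝ ({x | ⟪u, x - p⟫ = 0} ∩ {x | ⟪v, x - q⟫ = 0}) ≤
      (Submodule.span ℝ {u, v})ᗮ := by
    rw [vectorSpan_def, Submodule.span_le, Set.vsub_subset_iff]
    rintro x ⟨hxu, hxv⟩ y ⟨hyu, hyv⟩
    have hsub (w r : V) (hx : ⟪w, x - r⟫ = 0) (hy : ⟪w, y - r⟫ = 0) : ⟪w, x - y⟫ = 0 := by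
      rw [← sub_sub_sub_cancel_right x y r, inner_sub_right, hx, hy, sub_zero]
    rw [SetLike.mem_coe, Submodule.span_insert, ← Submodule.inf_orthogonal, Submodule.mem_inf,
      Submodule.mem_orthogonal_singleton_iff_inner_right,
      Submodule.mem_orthogonal_singleton_iff_inner_right, vsub_eq_sub]
    exact ⟨hsub u p hxu hyu, hsub v q hxv hyv⟩
  rw [collinear_iff_finrank_le_one]
  calc finrank ℝ (vectorSpan ℝ _) ≤ finrank ℝ (Submodule.span ℝ {u, v})ᗮ :=
        Submodule.finrank_mono hdir
    _ = 1 := by rw [finrank_orthogonal_span_pair huv, hV]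

theorem encard_circle_inter_plane_le_two (hV : finrank ℝ V = 3) {N n : V}
    (hNn : LinearIndependent ℝ ![N, n]) (B q : V) (ℓ : ℝ) :
    ({x | ⟪n, x - B⟫ = 0 ∧ ‖x - B‖ = ℓ} ∩ {x | ⟪N, x - q⟫ = 0}).encard ≤ 2 := by
  refine Collinear.encard_le_two_of_cospherical ?_ ⟨B, ℓ, fun x hx => ?_⟩
  · refine (collinear_plane_inter_plane hV hNn q B).subset ?_
    rintro x ⟨⟨hxn, -⟩, hxN⟩
    exact ⟨hxN, hxn⟩
  · rw [dist_eq_norm]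
    exact hx.1.2

end

theorem midplane_to_midjoints_finite_general (N q : E3)
    (Ni : Fin 3 → E3) (B : Fin 3 → E3) (ℓ : Fin 3 → ℝ)
    (hcross : ∀ i, cross3 N (Ni i) ≠ 0) :
    let M : Fin 3 → Set E3 := fun i => {x | ⟪Ni i, x - B i⟫ = 0 ∧ ‖x - B i‖ = ℓ i}
    let P : Set E3 := {x | ⟪N, x - q⟫ = 0}
    let S : Set (E3 × E3 × E3) :=
      {m | m.1 ∈ M 0 ∩ P ∧ m.2.1 ∈ M 1 ∩ P ∧ m.2.2 ∈ M 2 ∩ P}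
    (∀ i, (M i ∩ P).Finite ∧ (M i ∩ P).ncard ≤ 2) ∧
    (S.Finite ∧ S.ncard ≤ 8) := by
  intro M P S
  have hMP (i : Fin 3) : (M i ∩ P).encard ≤ 2 :=
    encard_circle_inter_plane_le_two finrank_euclideanSpace_fin
      (cross3_ne_zero_iff_linearIndependent.mp (hcross i)) (B i) q (ℓ i)
  have hS : S = (M 0 ∩ P) ×ˢ (M 1 ∩ P) ×ˢ (M 2 ∩ P) := rfl
  have hS8 : S.encard ≤ 8 := by
    rw [hS, Set.encard_prod, Set.encard_prod]
    calc _ ≤ (2 : ℕ∞) * (2 * 2) := mul_le_mul' (hMP 0) (mul_le_mul' (hMP 1) (hMP 2))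
      _ = 8 := by norm_num
  simp only [← Set.encard_le_coe_iff_finite_ncard_le]
  exact ⟨hMP, hS8⟩

/-- **Midplane to midjoints, nondegenerate case.** If the midplane `P` is not parallel
to any of the three midcircle planes, then each `Mᵢ ∩ P` has at most 2 points and the
set of midjoint triples is finite with at most 8 elements. -/
theorem midplane_to_midjoints_finite (N q : E3) (hN : N ≠ 0)
    (Ni : Fin 3 → E3) (B : Fin 3 → E3) (ℓ : Fin 3 → ℝ)
    (hNi : ∀ i, ‖Ni i‖ = 1) (hℓ : ∀ i, 0 < ℓ i)
    (hcross : ∀ i, cross3 N (Ni i) ≠ 0) :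
    let M : Fin 3 → Set E3 := fun i => {x | ⟪Ni i, x - B i⟫ = 0 ∧ ‖x - B i‖ = ℓ i}
    let P : Set E3 := {x | ⟪N, x - q⟫ = 0}
    let S : Set (E3 × E3 × E3) :=
      {m | m.1 ∈ M 0 ∩ P ∧ m.2.1 ∈ M 1 ∩ P ∧ m.2.2 ∈ M 2 ∩ P}
    (∀ i, (M i ∩ P).Finite ∧ (M i ∩ P).ncard ≤ 2) ∧
    (S.Finite ∧ S.ncard ≤ 8) :=
  midplane_to_midjoints_finite_general N q Ni B ℓ hcross
end
end

section
/- Let N ∈ ℝ³ be nonzero, q ∈ ℝ³, D_c = R_{[N,q]}(0), N_D = R_{[N,0]}(−e₃), and let T = T_z·e₃ with T_z ≤ 0 (so T ∈ Z≤0). Then T lies on the forward-pointing ray {D_c + t·N_D : t ≥ 0} if and only if either ⟨N, T − q⟩ = 0 (the midplane contains both q and T), or N is a nonzero scalar multiple of e₃ and ⟨q, e₃⟩ ≤ T_z/2. -/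
/-!
Every point of the ray has the form `(2⟪N, q + t e₃⟫/‖N‖²) N − t e₃`, so `T_z e₃` lies on it at
parameter `t` iff `(T_z + t) e₃` is that multiple of `N`. If `T_z + t = 0` the multiple vanishes,
i.e. `⟪N, q − T⟫ = 0`. Otherwise `N` is a nonzero multiple of `e₃`; the reflection
then sends `0` to `2⟪q, e₃⟫ e₃` and `−e₃` to `e₃`, so the ray is the half axis above `2⟪q, e₃⟫ e₃`.
-/

open RealInnerProductSpace

noncomputable section

lemma e3_ne_zero : e3 ≠ 0 := by
  simp [e3]

lemma norm_e3 : ‖e3‖ = 1 := by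
  simp [e3]

lemma real_inner_e3_self : ⟪e3, e3⟫ = 1 := by
  rw [real_inner_self_eq_norm_sq, norm_e3, one_pow]

lemma refl3_smul_left {c : ℝ} (hc : c ≠ 0) (N q a : E3) : refl3 (c • N) q a = refl3 N q a := by
  simp only [refl3, real_inner_smul_left, norm_smul, Real.norm_eq_abs, mul_pow, sq_abs,
    smul_smul]
  congr 2
  by_cases hN : ‖N‖ = 0
  · simp [hN]
  · field_simp

lemma refl3_e3_zero (q : E3) : refl3 e3 q 0 = (2 * ⟪q, e3⟫) • e3 := by
  simp only [refl3, zero_sub, inner_neg_right, real_inner_comm e3, norm_e3]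
  module

lemma refl3_e3_neg_e3 : refl3 e3 0 (-e3) = e3 := by
  simp only [refl3, sub_zero, inner_neg_right, real_inner_e3_self, norm_e3]
  module

lemma refl3_ray_eq (N q a : E3) (t : ℝ) :
    refl3 N q 0 + t • refl3 N 0 (-a) = (2 * ⟪N, q + t • a⟫ / ‖N‖ ^ 2) • N - t • a := by
  simp only [refl3, zero_sub, sub_zero, inner_neg_right, inner_add_right, real_inner_smul_right]
  module

lemma mem_vertical_ray_iff {c : ℝ} (hc : c ≠ 0) (q : E3) (Tz t : ℝ) :
    Tz • e3 = refl3 (c • e3) q 0 + t • refl3 (c • e3) 0 (-e3) ↔ t = Tz - 2 * ⟪q, e3⟫ := by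
  rw [refl3_smul_left hc, refl3_smul_left hc, refl3_e3_zero, refl3_e3_neg_e3, ← add_smul,
    (smul_left_injective ℝ e3_ne_zero).eq_iff]
  constructor <;> intro h <;> linarith

lemma exists_eq_smul_of_smul_eq_smul {K V : Type*} [Field K] [AddCommGroup V] [Module K V]
    {u N : V} {s k : K} (hu : u ≠ 0) (hs : s ≠ 0) (h : s • u = k • N) :
    ∃ c : K, c ≠ 0 ∧ N = c • u := by
  have hk : k ≠ 0 := by
    rintro rfl
    exact smul_ne_zero hs hu (h.trans (zero_smul K N))
  refine ⟨k⁻¹ * s, mul_ne_zero (inv_ne_zero hk) hs, ?_⟩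
  rw [mul_smul, h, inv_smul_smul₀ hk]

/-- **Constrained-midplane pointing at an axis target.** For a midplane with normal
`N ≠ 0` through `q` and target `T = T_z • e₃` with `T_z ≤ 0`: the configuration points
at `T` iff either the midplane contains `T`, or `N` is a nonzero multiple of `e₃` and
`⟪q, e₃⟫ ≤ T_z/2`. -/
theorem constrained_pointing_axis_target (N q : E3) (hN : N ≠ 0)
    (Tz : ℝ) (hTz : Tz ≤ 0) :
    (∃ t : ℝ, 0 ≤ t ∧ Tz • e3 = refl3 N q 0 + t • refl3 N 0 (-e3)) ↔
      (⟪N, Tz • e3 - q⟫ = 0 ∨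
        ((∃ c : ℝ, c ≠ 0 ∧ N = c • e3) ∧ ⟪q, e3⟫ ≤ Tz / 2)) := by
  have hplane : ⟪N, q + -Tz • e3⟫ = -⟪N, Tz • e3 - q⟫ := by
    rw [← inner_neg_right, neg_sub, neg_smul, sub_eq_add_neg]
  constructor
  · rintro ⟨t, ht, hT⟩
    have hray := hT
    rw [refl3_ray_eq, eq_sub_iff_add_eq, ← add_smul] at hray
    by_cases hs : Tz + t = 0
    · obtain rfl : t = -Tz := by linarith
      have hN2 : ‖N‖ ^ 2 ≠ 0 := by positivity
      rw [hs, zero_smul, eq_comm, smul_eq_zero_iff_left hN, div_eq_zero_iff, or_iff_left hN2,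
        mul_eq_zero, or_iff_right two_ne_zero] at hray
      left
      linarith
    · obtain ⟨c, hc, rfl⟩ := exists_eq_smul_of_smul_eq_smul e3_ne_zero hs hray
      rw [mem_vertical_ray_iff hc] at hT
      exact Or.inr ⟨⟨c, hc, rfl⟩, by linarith⟩
  · rintro (hmid | ⟨⟨c, hc, rfl⟩, hq⟩)
    · refine ⟨-Tz, by linarith, ?_⟩
      rw [refl3_ray_eq, hplane, hmid]
      simp
    · exact ⟨_, by linarith, (mem_vertical_ray_iff hc q Tz _).2 rfl⟩
end
end

section
/- Let ρ̂ ∈ ℝ³ be a unit vector with ⟨ρ̂, e₃⟩ = 0, let N_ρ, N_z, ρ, z ∈ ℝ with (N_ρ, N_z) ≠ (0, 0) and (ρ, z) ≠ (0, 0), and set N = N_ρ·ρ̂ + N_z·e₃ and x = ρ·ρ̂ + z·e₃. Define F(x) = 2(⟨x, e₃⟩/‖x‖²)·x − e₃. Then there exists a nonzero c ∈ ℝ with N = c·F(x) if and only if N_ρ·(z² − ρ²) − 2N_z·ρz = 0. -/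
open RealInnerProductSpace

noncomputable section

/-- The distal normal field `F(x) = 2(⟪x, e₃⟫/‖x‖²) • x − e₃`. -/
def F (x : E3) : E3 := (2 * ⟪x, e3⟫ / ‖x‖ ^ 2) • x - e3


/-! In the orthonormal frame `(ρ̂, e₃)`, `F(x)` is the reflection of `e₃` in the line `ℝ x`, so it has
the double-angle coordinates `(2ρz, z² - ρ²) / (ρ² + z²)`, a nonzero pair. Two nonzero plane
vectors are nonzero multiples of each other iff their 2 × 2 determinant vanishes, and clearing the
denominator `ρ² + z²` in that determinant leaves `Ẽ_N(ρ, z)`. -/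

lemma sq_add_sq_pos_of_ne {a b : ℝ} (h : (a, b) ≠ (0, 0)) : 0 < a ^ 2 + b ^ 2 := by
  by_contra! h'
  exact h (by simp only [Prod.mk.injEq]; constructor <;> nlinarith [sq_nonneg a, sq_nonneg b])

section Orthonormal

variable {V : Type*} [NormedAddCommGroup V] [InnerProductSpace ℝ V] {u v : V}

lemma orthonormal_pair (hu : ‖u‖ = 1) (hv : ‖v‖ = 1) (huv : ⟪u, v⟫ = 0) :
    Orthonormal ℝ ![u, v] := by
  refine ⟨fun i ↦ by fin_cases i <;> assumption, fun i j hij ↦ ?_⟩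
  fin_cases i <;> fin_cases j <;> simp_all [real_inner_comm]

lemma smul_add_smul_eq_iff_of_orthonormal (hu : ‖u‖ = 1) (hv : ‖v‖ = 1) (huv : ⟪u, v⟫ = 0)
    {a b a' b' : ℝ} : a • u + b • v = a' • u + b' • v ↔ a = a' ∧ b = b' :=
  ⟨(orthonormal_pair hu hv huv).linearIndependent.eq_of_pair, by rintro ⟨rfl, rfl⟩; rfl⟩

lemma inner_smul_add_smul_right_of_orthonormal (hv : ‖v‖ = 1) (huv : ⟪u, v⟫ = 0) (a b : ℝ) :
    ⟪a • u + b • v, v⟫ = b := by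
  simp [inner_add_left, real_inner_smul_left, huv, hv]

lemma norm_smul_add_smul_sq_of_orthonormal (hu : ‖u‖ = 1) (hv : ‖v‖ = 1) (huv : ⟪u, v⟫ = 0)
    (a b : ℝ) : ‖a • u + b • v‖ ^ 2 = a ^ 2 + b ^ 2 := by
  have h : ⟪a • u, b • v⟫ = 0 := by simp [real_inner_smul_left, real_inner_smul_right, huv]
  rw [sq, norm_add_sq_eq_norm_sq_add_norm_sq_real h]
  simp [norm_smul, hu, hv, ← sq]

lemma two_inner_div_norm_sq_smul_sub_of_orthonormal (hu : ‖u‖ = 1) (hv : ‖v‖ = 1)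
    (huv : ⟪u, v⟫ = 0) {a b : ℝ} (hab : (a, b) ≠ (0, 0)) :
    (2 * ⟪a • u + b • v, v⟫ / ‖a • u + b • v‖ ^ 2) • (a • u + b • v) - v =
      (2 * a * b / (a ^ 2 + b ^ 2)) • u + ((b ^ 2 - a ^ 2) / (a ^ 2 + b ^ 2)) • v := by
  have hs := (sq_add_sq_pos_of_ne hab).ne'
  rw [inner_smul_add_smul_right_of_orthonormal hv huv,
    norm_smul_add_smul_sq_of_orthonormal hu hv huv]
  match_scalars
  · field_simp
  · field_simp
    ring

end Orthonormal

lemma F_smul_add_smul_e3 {ρhat : E3} (hρ : ‖ρhat‖ = 1) (hperp : ⟪ρhat, e3⟫ = 0) {ρ z : ℝ}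
    (hx : (ρ, z) ≠ (0, 0)) :
    F (ρ • ρhat + z • e3) =
      (2 * ρ * z / (ρ ^ 2 + z ^ 2)) • ρhat + ((z ^ 2 - ρ ^ 2) / (ρ ^ 2 + z ^ 2)) • e3 :=
  two_inner_div_norm_sq_smul_sub_of_orthonormal hρ norm_e3 hperp hx

lemma double_angle_ne_zero {ρ z : ℝ} (hx : (ρ, z) ≠ (0, 0)) :
    (2 * ρ * z / (ρ ^ 2 + z ^ 2), (z ^ 2 - ρ ^ 2) / (ρ ^ 2 + z ^ 2)) ≠ (0, 0) := by
  have hs := (sq_add_sq_pos_of_ne hx).ne'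
  intro h
  obtain ⟨h₁, h₂⟩ := Prod.mk.inj h
  rw [div_eq_zero_iff, or_iff_left hs] at h₁ h₂
  exact hs (pow_eq_zero_iff two_ne_zero |>.mp <|
    by linear_combination (2 * ρ * z) * h₁ + (z ^ 2 - ρ ^ 2) * h₂)

lemma exists_ne_zero_eq_mul_iff {p q a b : ℝ} (hpq : (p, q) ≠ (0, 0)) (hab : (a, b) ≠ (0, 0)) :
    (∃ c : ℝ, c ≠ 0 ∧ p = c * a ∧ q = c * b) ↔ p * b - q * a = 0 := by
  refine ⟨fun ⟨c, _, hp, hq⟩ ↦ by rw [hp, hq]; ring, fun h ↦ ?_⟩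
  have hs := (sq_add_sq_pos_of_ne hab).ne'
  refine ⟨(p * a + q * b) / (a ^ 2 + b ^ 2), ?_, ?_, ?_⟩
  · intro h0
    rw [div_eq_zero_iff, or_iff_left hs] at h0
    have lagrange : (p * a + q * b) ^ 2 + (p * b - q * a) ^ 2 =
        (p ^ 2 + q ^ 2) * (a ^ 2 + b ^ 2) := by ring
    rw [h0, h] at lagrange
    exact (mul_pos (sq_add_sq_pos_of_ne hpq) (sq_add_sq_pos_of_ne hab)).ne' (by linarith)
  · field_simp; linear_combination b * h
  · field_simp; linear_combination -a * h

/-- **Az/El pointing locus.** With `N = N_ρ • ρ̂ + N_z • e₃ ≠ 0` and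
`x = ρ • ρ̂ + z • e₃ ≠ 0`, the direction `N` is a nonzero multiple of `F(x)` iff
`Ẽ_N(ρ, z) = N_ρ(z² − ρ²) − 2N_z ρz = 0`. -/
theorem azel_pointing_locus (ρhat : E3) (hρ : ‖ρhat‖ = 1) (hperp : ⟪ρhat, e3⟫ = 0)
    (Nρ Nz ρ z : ℝ) (hN : (Nρ, Nz) ≠ (0, 0)) (hx : (ρ, z) ≠ (0, 0)) :
    (∃ c : ℝ, c ≠ 0 ∧ Nρ • ρhat + Nz • e3 = c • F (ρ • ρhat + z • e3)) ↔
      Nρ * (z ^ 2 - ρ ^ 2) - 2 * Nz * ρ * z = 0 := by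
  have hs := (sq_add_sq_pos_of_ne hx).ne'
  simp_rw [F_smul_add_smul_e3 hρ hperp hx, smul_add, smul_smul,
    smul_add_smul_eq_iff_of_orthonormal hρ norm_e3 hperp]
  rw [exists_ne_zero_eq_mul_iff hN (double_angle_ne_zero hx),
    show Nρ * ((z ^ 2 - ρ ^ 2) / (ρ ^ 2 + z ^ 2)) - Nz * (2 * ρ * z / (ρ ^ 2 + z ^ 2)) =
      (Nρ * (z ^ 2 - ρ ^ 2) - 2 * Nz * ρ * z) / (ρ ^ 2 + z ^ 2) by ring,
    div_eq_zero_iff, or_iff_left hs]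
end
end
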